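/- arXiv:1803.01718 — 4 statements merged into one kernel-verified Lean document; each statement's English description precedes it below -/
import Mathlib

section
/- Let E be a Banach space and 1 ≤ p, q < ∞. For every mid (q,p)-summable sequence (x_j)_{j=1}^∞ in E, the quantity ‖(x_j)‖_{q,p} = sup over (x_n*) in the closed unit ball of ℓ_p^w(E*) of (∑_{j=1}^∞ (∑_{n=1}^∞ |x_n*(x_j)|^p)^{q/p})^{1/q} is finite. -/
open NormedSpace MeasureTheory

noncomputable section

/-- A sequence `x` in `E` is weakly `p`-summable: `∑_j |φ(x_j)|^p < ∞` for all `φ ∈ E*`. -/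
def WeaklySummable (𝕜 : Type*) [RCLike 𝕜] {E : Type*} [NormedAddCommGroup E]
    [NormedSpace 𝕜 E] (p : ℝ) (x : ℕ → E) : Prop :=
  ∀ φ : StrongDual 𝕜 E, Summable fun j => ‖φ (x j)‖ ^ p

/-- The weak `p`-norm of a sequence: `sup_{φ ∈ B_{E*}} (∑_j |φ(x_j)|^p)^{1/p}`. -/
def weakNorm (𝕜 : Type*) [RCLike 𝕜] {E : Type*} [NormedAddCommGroup E]
    [NormedSpace 𝕜 E] (p : ℝ) (x : ℕ → E) : ℝ :=
  ⨆ φ : {φ : StrongDual 𝕜 E // ‖φ‖ ≤ 1}, (∑' j, ‖φ.1 (x j)‖ ^ p) ^ (1 / p)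

/-- A sequence `x` in `E` is mid `(q,p)`-summable:
`∑_j (∑_n |x_n^*(x_j)|^p)^{q/p} < ∞` for every weakly `p`-summable sequence `(x_n^*)` in `E*`. -/
def MidSummable (𝕜 : Type*) [RCLike 𝕜] {E : Type*} [NormedAddCommGroup E]
    [NormedSpace 𝕜 E] (q p : ℝ) (x : ℕ → E) : Prop :=
  ∀ xs : ℕ → StrongDual 𝕜 E, WeaklySummable 𝕜 p xs →
    Summable fun j => (∑' n, ‖xs n (x j)‖ ^ p) ^ (q / p)

/-- The mid `(q,p)`-norm:
`sup over (x_n^*) in the closed unit ball of ℓ_p^w(E*)` of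
`(∑_j (∑_n |x_n^*(x_j)|^p)^{q/p})^{1/q}`. -/
def midNorm (𝕜 : Type*) [RCLike 𝕜] {E : Type*} [NormedAddCommGroup E]
    [NormedSpace 𝕜 E] (q p : ℝ) (x : ℕ → E) : ℝ :=
  ⨆ xs : {xs : ℕ → StrongDual 𝕜 E // WeaklySummable 𝕜 p xs ∧ weakNorm 𝕜 p xs ≤ 1},
    (∑' j, (∑' n, ‖xs.1 n (x j)‖ ^ p) ^ (q / p)) ^ (1 / q)

/-- `u : X → Y` is absolutely `p`-summing: there is `C > 0` with
`(∑_{j=1}^k ‖u(x_j)‖^p)^{1/p} ≤ C sup_{φ ∈ B_{X*}} (∑_{j=1}^k |φ(x_j)|^p)^{1/p}`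
for all finite families. -/
def AbsolutelySumming (𝕜 : Type*) [RCLike 𝕜] {X Y : Type*} [NormedAddCommGroup X]
    [NormedSpace 𝕜 X] [NormedAddCommGroup Y] [NormedSpace 𝕜 Y] (p : ℝ)
    (u : X →L[𝕜] Y) : Prop :=
  ∃ C > 0, ∀ (k : ℕ) (z : Fin k → X),
    (∑ j, ‖u (z j)‖ ^ p) ^ (1 / p) ≤
      C * ⨆ φ : {φ : StrongDual 𝕜 X // ‖φ‖ ≤ 1}, (∑ j, ‖φ.1 (z j)‖ ^ p) ^ (1 / p)

/-- The `p`-summing norm `π_p(u)`: the least admissible constant. -/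
def piNorm (𝕜 : Type*) [RCLike 𝕜] {X Y : Type*} [NormedAddCommGroup X]
    [NormedSpace 𝕜 X] [NormedAddCommGroup Y] [NormedSpace 𝕜 Y] (p : ℝ)
    (u : X →L[𝕜] Y) : ℝ :=
  sInf {C : ℝ | 0 < C ∧ ∀ (k : ℕ) (z : Fin k → X),
    (∑ j, ‖u (z j)‖ ^ p) ^ (1 / p) ≤
      C * ⨆ φ : {φ : StrongDual 𝕜 X // ‖φ‖ ≤ 1}, (∑ j, ‖φ.1 (z j)‖ ^ p) ^ (1 / p)}

/-!
If the supremum were infinite, choose `(x*_{k,n})_n` in the unit ball of `ℓ_p^w(E*)` with value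
exceeding `2^k k`. The glued sequence `(2^{-k} x*_{k,n})_{k,n}` is again weakly `p`-summable, so
by mid summability its value is finite; yet it is at least `2^{-k}` times the value of the `k`-th
sequence, hence exceeds every `k`. Weak summability of the glued sequence rests on
`∑_n |Φ(x*_n)|^p ≤ (‖Φ‖ ‖(x*_n)‖_{w,p})^p`, i.e. on the weak norm being a finite supremum, which
is the uniform boundedness principle on the Banach space `E*`.
-/

section WeakSummability

variable {𝕜 X : Type*} [RCLike 𝕜] [NormedAddCommGroup X] [NormedSpace 𝕜 X] {p : ℝ}
  {xs : ℕ → X}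

lemma weakNorm_nonneg : 0 ≤ weakNorm 𝕜 p xs :=
  Real.iSup_nonneg fun _ => by positivity

/-- Banach–Steinhaus for the truncations `φ ↦ (φ (xs i))_{i < k}` into `ℓ_p`, which are
pointwise bounded on the Banach space `X*`. -/
theorem WeaklySummable.exists_tsum_le (hp : 1 ≤ p) (h : WeaklySummable 𝕜 p xs) :
    ∃ C, ∀ φ : StrongDual 𝕜 X, ‖φ‖ ≤ 1 → ∑' n, ‖φ (xs n)‖ ^ p ≤ C := by
  have hp0 : 0 < p := by linarith
  have : Fact (1 ≤ ENNReal.ofReal p) := ⟨by simpa using hp⟩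
  have hpr : (ENNReal.ofReal p).toReal = p := ENNReal.toReal_ofReal hp0.le
  let T (k : ℕ) : StrongDual 𝕜 X →L[𝕜] lp (fun _ : ℕ => 𝕜) (ENNReal.ofReal p) :=
    ∑ i ∈ Finset.range k,
      lp.singleContinuousLinearMap 𝕜 _ _ i ∘L ContinuousLinearMap.apply 𝕜 𝕜 (xs i)
  have hT (k : ℕ) (φ : StrongDual 𝕜 X) :
      ‖T k φ‖ ^ p = ∑ i ∈ Finset.range k, ‖φ (xs i)‖ ^ p := by
    have := lp.norm_sum_single (by rw [hpr]; exact hp0) (fun i => φ (xs i)) (Finset.range k)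
    rw [hpr] at this
    simpa [T] using this
  obtain ⟨C, hC⟩ := banach_steinhaus (g := T) fun φ =>
    ⟨(∑' n, ‖φ (xs n)‖ ^ p) ^ p⁻¹, fun k => by
      rw [Real.le_rpow_inv_iff_of_pos (norm_nonneg _) (by positivity) hp0, hT]
      exact (h φ).sum_le_tsum _ fun n _ => by positivity⟩
  refine ⟨C ^ p, fun φ hφ => Real.tsum_le_of_sum_range_le (fun n => by positivity) fun k => ?_⟩
  rw [← hT]
  gcongr
  calc ‖T k φ‖ ≤ ‖T k‖ * ‖φ‖ := (T k).le_opNorm φ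
    _ ≤ ‖T k‖ := mul_le_of_le_one_right (norm_nonneg (T k)) hφ
    _ ≤ C := hC k

theorem WeaklySummable.tsum_norm_rpow_le (hp : 1 ≤ p) (h : WeaklySummable 𝕜 p xs)
    (φ : StrongDual 𝕜 X) : ∑' n, ‖φ (xs n)‖ ^ p ≤ (‖φ‖ * weakNorm 𝕜 p xs) ^ p := by
  have hp0 : 0 < p := by linarith
  have hball (ψ : StrongDual 𝕜 X) (hψ : ‖ψ‖ ≤ 1) :
      ∑' n, ‖ψ (xs n)‖ ^ p ≤ weakNorm 𝕜 p xs ^ p := by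
    obtain ⟨C, hC⟩ := h.exists_tsum_le hp
    have hbdd : BddAbove (Set.range fun ψ : {ψ : StrongDual 𝕜 X // ‖ψ‖ ≤ 1} =>
        (∑' n, ‖ψ.1 (xs n)‖ ^ p) ^ (1 / p)) := by
      refine ⟨C ^ (1 / p), Set.forall_mem_range.2 fun ψ => ?_⟩
      gcongr
      exact hC ψ.1 ψ.2
    rw [← Real.rpow_inv_le_iff_of_pos (by positivity) weakNorm_nonneg hp0, ← one_div]
    exact le_ciSup hbdd ⟨ψ, hψ⟩
  rcases eq_or_ne φ 0 with rfl | hφ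
  · simp [Real.zero_rpow hp0.ne']
  have hφ0 : 0 < ‖φ‖ := norm_pos_iff.2 hφ
  let ψ : StrongDual 𝕜 X := ((‖φ‖ : 𝕜))⁻¹ • φ
  have hψ : ‖ψ‖ ≤ 1 := by
    rw [norm_smul, norm_inv, RCLike.norm_ofReal, abs_of_pos hφ0, inv_mul_cancel₀ hφ0.ne']
  have hφψ (y : X) : ‖φ y‖ = ‖φ‖ * ‖ψ y‖ := by
    simp [ψ, hφ0.ne']
  calc ∑' n, ‖φ (xs n)‖ ^ p = ‖φ‖ ^ p * ∑' n, ‖ψ (xs n)‖ ^ p := by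
        simp_rw [hφψ, Real.mul_rpow hφ0.le (norm_nonneg _), tsum_mul_left]
    _ ≤ ‖φ‖ ^ p * weakNorm 𝕜 p xs ^ p := by gcongr; exact hball ψ hψ
    _ = (‖φ‖ * weakNorm 𝕜 p xs) ^ p := (Real.mul_rpow hφ0.le weakNorm_nonneg).symm

end WeakSummability

section Glue

variable {𝕜 X : Type*} [RCLike 𝕜] [NormedAddCommGroup X] [NormedSpace 𝕜 X] {p : ℝ}
  (c : ℕ → 𝕜) (xs : ℕ → ℕ → X)

def glue (m : ℕ) : X := c m.unpair.1 • xs m.unpair.1 m.unpair.2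

lemma norm_glue_pair_rpow (φ : StrongDual 𝕜 X) (k n : ℕ) :
    ‖φ (glue c xs (Nat.pair k n))‖ ^ p = ‖c k‖ ^ p * ‖φ (xs k n)‖ ^ p := by
  simp [glue, Real.mul_rpow]

theorem weaklySummable_glue (hp : 1 ≤ p) (hxs : ∀ k, WeaklySummable 𝕜 p (xs k))
    (hball : ∀ k, weakNorm 𝕜 p (xs k) ≤ 1) (hc : Summable fun k => ‖c k‖ ^ p) :
    WeaklySummable 𝕜 p (glue c xs) := by
  intro φ
  rw [← Nat.pairEquiv.summable_iff]
  refine (summable_prod_of_nonneg fun _ => Real.rpow_nonneg (norm_nonneg _) _).2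
    ⟨fun k => ?_, ?_⟩
  · simpa [Function.comp_def, norm_glue_pair_rpow] using (hxs k φ).mul_left (‖c k‖ ^ p)
  refine .of_nonneg_of_le (fun k => tsum_nonneg fun _ => Real.rpow_nonneg (norm_nonneg _) _)
    (fun k => ?_) (hc.mul_right (‖φ‖ ^ p))
  simp only [Nat.pairEquiv_apply, Function.uncurry_apply_pair, norm_glue_pair_rpow,
    tsum_mul_left]
  gcongr
  calc ∑' n, ‖φ (xs k n)‖ ^ p ≤ (‖φ‖ * weakNorm 𝕜 p (xs k)) ^ p :=
        (hxs k).tsum_norm_rpow_le hp φ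
    _ ≤ ‖φ‖ ^ p := by
        gcongr
        · exact mul_nonneg (norm_nonneg _) weakNorm_nonneg
        · exact mul_le_of_le_one_right (norm_nonneg _) (hball k)

lemma mul_tsum_le_tsum_glue (φ : StrongDual 𝕜 X)
    (h : Summable fun m => ‖φ (glue c xs m)‖ ^ p) (k : ℕ) :
    ‖c k‖ ^ p * ∑' n, ‖φ (xs k n)‖ ^ p ≤ ∑' m, ‖φ (glue c xs m)‖ ^ p := by
  rw [← tsum_mul_left]
  simp_rw [← norm_glue_pair_rpow]
  exact tsum_comp_le_tsum_of_inj h (fun _ => by positivity)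
    (Nat.pairEquiv.injective.comp (Prod.mk_right_injective k))

end Glue

section MidSummable

variable {𝕜 E : Type*} [RCLike 𝕜] [NormedAddCommGroup E] [NormedSpace 𝕜 E] {p q : ℝ}
  {x : ℕ → E}

def midValue (q p : ℝ) (x : ℕ → E) (xs : ℕ → StrongDual 𝕜 E) : ℝ :=
  (∑' j, (∑' n, ‖xs n (x j)‖ ^ p) ^ (q / p)) ^ (1 / q)

theorem MidSummable.norm_mul_midValue_le_midValue_glue (hx : MidSummable 𝕜 q p x)
    (hp : 0 < p) (hq : 0 < q) (c : ℕ → 𝕜) (xs : ℕ → ℕ → StrongDual 𝕜 E)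
    (hxs : ∀ k, WeaklySummable 𝕜 p (xs k)) (hglue : WeaklySummable 𝕜 p (glue c xs)) (k : ℕ) :
    ‖c k‖ * midValue q p x (xs k) ≤ midValue q p x (glue c xs) := by
  have hterm (j : ℕ) : ‖c k‖ ^ q * (∑' n, ‖xs k n (x j)‖ ^ p) ^ (q / p) ≤
      (∑' m, ‖glue c xs m (x j)‖ ^ p) ^ (q / p) := by
    calc ‖c k‖ ^ q * (∑' n, ‖xs k n (x j)‖ ^ p) ^ (q / p)
        = (‖c k‖ ^ p * ∑' n, ‖xs k n (x j)‖ ^ p) ^ (q / p) := by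
          rw [Real.mul_rpow (by positivity) (by positivity), ← Real.rpow_mul (norm_nonneg _),
            mul_div_cancel₀ q hp.ne']
      _ ≤ _ := by
          gcongr
          exact mul_tsum_le_tsum_glue c xs (inclusionInDoubleDual 𝕜 E (x j)) (hglue _) k
  have hsum := Summable.tsum_le_tsum hterm ((hx _ (hxs k)).mul_left _) (hx _ hglue)
  rw [tsum_mul_left] at hsum
  calc ‖c k‖ * midValue q p x (xs k)
      = (‖c k‖ ^ q * ∑' j, (∑' n, ‖xs k n (x j)‖ ^ p) ^ (q / p)) ^ (1 / q) := by
        rw [midValue, Real.mul_rpow (by positivity) (by positivity),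
          ← Real.rpow_mul (norm_nonneg _), mul_one_div_cancel hq.ne', Real.rpow_one]
    _ ≤ midValue q p x (glue c xs) := by rw [midValue]; gcongr

end MidSummable

variable {𝕜 E F : Type*}

theorem stmt0_general [RCLike 𝕜] [NormedAddCommGroup E] [NormedSpace 𝕜 E]
    (p q : ℝ) (hp : 1 ≤ p) (hq : 1 ≤ q) (x : ℕ → E) (hx : MidSummable 𝕜 q p x) :
    BddAbove (Set.range
      fun xs : {xs : ℕ → StrongDual 𝕜 E // WeaklySummable 𝕜 p xs ∧ weakNorm 𝕜 p xs ≤ 1} =>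
        (∑' j, (∑' n, ‖xs.1 n (x j)‖ ^ p) ^ (q / p)) ^ (1 / q)) := by
  by_contra hunb
  choose a ha using fun k : ℕ =>
    Set.exists_range_iff.1 (not_bddAbove_iff.1 hunb ((2 : ℝ) ^ k * k))
  let c (k : ℕ) : 𝕜 := 2⁻¹ ^ k
  have hc : Summable fun k => ‖c k‖ ^ p := by
    have h2p : (2⁻¹ : ℝ) ^ p < 1 := Real.rpow_lt_one (by norm_num) (by norm_num) (by linarith)
    refine (summable_geometric_of_lt_one (by positivity) h2p).congr fun k => ?_
    rw [Real.rpow_pow_comm (by norm_num)]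
    simp [c]
  have hglue := weaklySummable_glue c (fun k => (a k).1) hp (fun k => (a k).2.1)
    (fun k => (a k).2.2) hc
  obtain ⟨k, hk⟩ := exists_nat_gt (midValue q p x (glue c fun k => (a k).1))
  have hck : ‖c k‖ * (2 ^ k * k) = k := by simp [c]
  have hbig : (k : ℝ) < ‖c k‖ * midValue q p x (a k).1 :=
    hck ▸ mul_lt_mul_of_pos_left (ha k) (by simp [c])
  linarith [hx.norm_mul_midValue_le_midValue_glue (by linarith) (by linarith) c
    (fun k => (a k).1) (fun k => (a k).2.1) hglue k]

/-- for a mid `(q,p)`-summable sequence the defining supremum is finite. -/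
theorem stmt0 [RCLike 𝕜] [NormedAddCommGroup E] [NormedSpace 𝕜 E] [CompleteSpace E]
    (p q : ℝ) (hp : 1 ≤ p) (hq : 1 ≤ q) (x : ℕ → E) (hx : MidSummable 𝕜 q p x) :
    BddAbove (Set.range
      fun xs : {xs : ℕ → StrongDual 𝕜 E // WeaklySummable 𝕜 p xs ∧ weakNorm 𝕜 p xs ≤ 1} =>
        (∑' j, (∑' n, ‖xs.1 n (x j)‖ ^ p) ^ (q / p)) ^ (1 / q)) :=
  stmt0_general p q hp hq x hx
end
end

section
/- Let E be a Banach space and 1 ≤ p < ∞, 1 ≤ q ≤ r < ∞. Every mid (q,p)-summable sequence in E is mid (r,p)-summable, and ‖(x_j)‖_{r,p} ≤ ‖(x_j)‖_{q,p} for every mid (q,p)-summable sequence (x_j)_{j=1}^∞ in E. -/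
/-! For weakly `p`-summable `(x_n^*)` put `b_j = ∑_n |x_n^*(x_j)|^p`. Mid `(q,p)`-summability says
`(b_j^{q/p})_j ∈ ℓ_1`, and for `s ≥ 1` a nonnegative `a ∈ ℓ_1` satisfies `∑ a_j^s ≤ (∑ a_j)^s`
because `a_j ≤ ∑ a`; with `a_j = b_j^{q/p}` and `s = r/q` this gives both claims pointwise in
`(x_n^*)`. Passing to the supremum needs `‖(x_j)‖_{q,p} < ∞` (a real `⨆` of an unbounded family
is `0`), which a gliding hump argument provides. -/

open NormedSpace MeasureTheory

noncomputable section

variable {𝕜 E F : Type*}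


section RpowSum

variable {ι : Type*} {a : ι → ℝ} {s : ℝ}

theorem rpow_le_mul_tsum_rpow_sub_one (ha : ∀ i, 0 ≤ a i) (hs : Summable a) (h1 : 1 ≤ s) (i : ι) :
    a i ^ s ≤ a i * (∑' j, a j) ^ (s - 1) :=
  calc a i ^ s = a i * a i ^ (s - 1) := by
        rw [← Real.rpow_one_add' (ha i) (by linarith), add_sub_cancel]
    _ ≤ a i * (∑' j, a j) ^ (s - 1) := by
        have hle : a i ≤ ∑' j, a j := hs.le_tsum i fun j _ => ha j
        exact mul_le_mul_of_nonneg_left (Real.rpow_le_rpow (ha i) hle (by linarith)) (ha i)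

theorem Summable.rpow_of_one_le (ha : ∀ i, 0 ≤ a i) (hs : Summable a) (h1 : 1 ≤ s) :
    Summable fun i => a i ^ s :=
  (hs.mul_right _).of_nonneg_of_le (fun i => Real.rpow_nonneg (ha i) s)
    (rpow_le_mul_tsum_rpow_sub_one ha hs h1)

theorem tsum_rpow_le_rpow_tsum (ha : ∀ i, 0 ≤ a i) (hs : Summable a) (h1 : 1 ≤ s) :
    ∑' i, a i ^ s ≤ (∑' i, a i) ^ s :=
  calc ∑' i, a i ^ s ≤ ∑' i, a i * (∑' j, a j) ^ (s - 1) :=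
        (hs.rpow_of_one_le ha h1).tsum_le_tsum (rpow_le_mul_tsum_rpow_sub_one ha hs h1)
          (hs.mul_right _)
    _ = (∑' i, a i) ^ s := by
        rw [tsum_mul_right, ← Real.rpow_one_add' (tsum_nonneg ha) (by linarith), add_sub_cancel]

end RpowSum

instance ENNReal.fact_one_le_ofReal {p : ℝ} [Fact (1 ≤ p)] : Fact (1 ≤ ENNReal.ofReal p) :=
  ⟨ENNReal.one_le_ofReal.mpr Fact.out⟩

theorem ENNReal.toReal_ofReal_of_fact_one_le (p : ℝ) [Fact (1 ≤ p)] :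
    (ENNReal.ofReal p).toReal = p :=
  ENNReal.toReal_ofReal (zero_le_one.trans Fact.out)

theorem ENNReal.toReal_ofReal_pos {p : ℝ} [Fact (1 ≤ p)] : 0 < (ENNReal.ofReal p).toReal := by
  rw [ENNReal.toReal_ofReal_of_fact_one_le p]
  exact zero_lt_one.trans_le Fact.out

section WeakSummability

variable {X : Type*} [RCLike 𝕜] [NormedAddCommGroup X] [NormedSpace 𝕜 X] {p : ℝ}

theorem weakNorm_zero (hp : p ≠ 0) : weakNorm 𝕜 p (0 : ℕ → X) = 0 := by
  simp [weakNorm, Real.zero_rpow hp, Real.zero_rpow (inv_ne_zero hp)]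

theorem weaklySummable_zero (hp : p ≠ 0) : WeaklySummable 𝕜 p (0 : ℕ → X) := fun _ => by
  simp [Real.zero_rpow hp]

end WeakSummability

namespace WeaklySummable

variable {X : Type*} [RCLike 𝕜] [NormedAddCommGroup X] [NormedSpace 𝕜 X] {p : ℝ} [Fact (1 ≤ p)]
  {xs : ℕ → X}

/-- Bounded by the closed graph theorem, the dual of any normed space being complete. -/
def toLp (h : WeaklySummable 𝕜 p xs) :
    StrongDual 𝕜 X →L[𝕜] lp (fun _ : ℕ => 𝕜) (ENNReal.ofReal p) :=
  let T : StrongDual 𝕜 X →ₗ[𝕜] lp (fun _ : ℕ => 𝕜) (ENNReal.ofReal p) :=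
    { toFun := fun φ => ⟨fun n => φ (xs n),
        memℓp_gen (by rw [ENNReal.toReal_ofReal_of_fact_one_le p]; exact h φ)⟩
      map_add' := fun _ _ => rfl
      map_smul' := fun _ _ => rfl }
  ⟨T, T.continuous_of_seq_closed_graph fun u φ y hu hTu => by
    ext n
    have hcoe :=
      (lp.uniformContinuous_coe (E := fun _ : ℕ => 𝕜) (p := ENNReal.ofReal p)).continuous
    exact tendsto_nhds_unique (((continuous_apply n).tendsto _).comp ((hcoe.tendsto y).comp hTu))
      (((ContinuousLinearMap.apply 𝕜 𝕜 (xs n)).continuous.tendsto φ).comp hu)⟩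

@[simp]
theorem toLp_apply (h : WeaklySummable 𝕜 p xs) (φ : StrongDual 𝕜 X) (n : ℕ) :
    h.toLp φ n = φ (xs n) :=
  rfl

theorem norm_toLp_rpow (h : WeaklySummable 𝕜 p xs) (φ : StrongDual 𝕜 X) :
    ‖h.toLp φ‖ ^ p = ∑' n, ‖φ (xs n)‖ ^ p := by
  have := lp.norm_rpow_eq_tsum ENNReal.toReal_ofReal_pos (h.toLp φ)
  simpa only [ENNReal.toReal_ofReal_of_fact_one_le p, toLp_apply] using this

theorem norm_toLp (h : WeaklySummable 𝕜 p xs) (φ : StrongDual 𝕜 X) :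
    ‖h.toLp φ‖ = (∑' n, ‖φ (xs n)‖ ^ p) ^ (1 / p) := by
  have := lp.norm_eq_tsum_rpow ENNReal.toReal_ofReal_pos (h.toLp φ)
  simpa only [ENNReal.toReal_ofReal_of_fact_one_le p, toLp_apply] using this

theorem opNorm_toLp_le_one (h : WeaklySummable 𝕜 p xs) (h1 : weakNorm 𝕜 p xs ≤ 1) :
    ‖h.toLp‖ ≤ 1 := by
  have hbdd : BddAbove (Set.range fun φ : {φ : StrongDual 𝕜 X // ‖φ‖ ≤ 1} =>
      (∑' n, ‖φ.1 (xs n)‖ ^ p) ^ (1 / p)) := by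
    refine ⟨‖h.toLp‖, ?_⟩
    rintro _ ⟨φ, rfl⟩
    change (∑' n, ‖φ.1 (xs n)‖ ^ p) ^ (1 / p) ≤ _
    rw [← h.norm_toLp]
    exact h.toLp.le_of_opNorm_le_of_le le_rfl φ.2 |>.trans_eq (mul_one _)
  refine ContinuousLinearMap.opNorm_le_of_unit_norm zero_le_one fun φ hφ => ?_
  rw [h.norm_toLp]
  exact (le_ciSup hbdd ⟨φ, hφ.le⟩).trans h1

theorem tsum_rpow_le_of_weakNorm_le_one (h : WeaklySummable 𝕜 p xs) (h1 : weakNorm 𝕜 p xs ≤ 1)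
    (φ : StrongDual 𝕜 X) : ∑' n, ‖φ (xs n)‖ ^ p ≤ ‖φ‖ ^ p := by
  rw [← h.norm_toLp_rpow]
  have hφ : ‖h.toLp φ‖ ≤ ‖φ‖ :=
    h.toLp.le_of_opNorm_le (h.opNorm_toLp_le_one h1) φ |>.trans_eq (one_mul _)
  exact Real.rpow_le_rpow (norm_nonneg _) hφ (zero_le_one.trans Fact.out)

end WeaklySummable

section WeightedConcat

variable {X : Type*} [RCLike 𝕜] [NormedAddCommGroup X] [NormedSpace 𝕜 X] {p : ℝ}
  (c : ℕ → 𝕜) (xs : ℕ → ℕ → X)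

def weightedConcat : ℕ → X :=
  fun m => c m.unpair.1 • xs m.unpair.1 m.unpair.2

@[simp]
theorem weightedConcat_pair (k n : ℕ) : weightedConcat c xs (Nat.pair k n) = c k • xs k n := by
  simp [weightedConcat]

variable {c xs}

theorem norm_apply_smul_rpow (Φ : StrongDual 𝕜 X) (a : 𝕜) (v : X) :
    ‖Φ (a • v)‖ ^ p = ‖a‖ ^ p * ‖Φ v‖ ^ p := by
  rw [map_smul, smul_eq_mul, norm_mul, Real.mul_rpow (norm_nonneg _) (norm_nonneg _)]

theorem WeaklySummable.weightedConcat [Fact (1 ≤ p)] (hxs : ∀ k, WeaklySummable 𝕜 p (xs k))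
    (hxs1 : ∀ k, weakNorm 𝕜 p (xs k) ≤ 1) (hc : Summable fun k => ‖c k‖ ^ p) :
    WeaklySummable 𝕜 p (weightedConcat c xs) := by
  intro Φ
  let F : ℕ × ℕ → ℝ := fun kn => ‖c kn.1‖ ^ p * ‖Φ (xs kn.1 kn.2)‖ ^ p
  have hF : Summable F := by
    have hF0 : 0 ≤ F := fun _ => by positivity
    refine (summable_prod_of_nonneg hF0).2 ⟨fun k => (hxs k Φ).mul_left (‖c k‖ ^ p), ?_⟩
    refine (hc.mul_right (‖Φ‖ ^ p)).of_nonneg_of_le (fun _ => tsum_nonneg fun _ => hF0 _)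
      fun k => ?_
    change ∑' n, ‖c k‖ ^ p * ‖Φ (xs k n)‖ ^ p ≤ _
    rw [tsum_mul_left]
    exact mul_le_mul_of_nonneg_left ((hxs k).tsum_rpow_le_of_weakNorm_le_one (hxs1 k) Φ)
      (by positivity)
  refine (Nat.pairEquiv.symm.summable_iff.2 hF).congr fun m => ?_
  exact (norm_apply_smul_rpow Φ _ _).symm

theorem mul_tsum_le_tsum_weightedConcat (Φ : StrongDual 𝕜 X)
    (hs : Summable fun m => ‖Φ (weightedConcat c xs m)‖ ^ p) (k : ℕ) :
    ‖c k‖ ^ p * ∑' n, ‖Φ (xs k n)‖ ^ p ≤ ∑' m, ‖Φ (weightedConcat c xs m)‖ ^ p := by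
  have hinj : Function.Injective (Nat.pair k) := fun _ _ h => (Nat.pair_eq_pair.1 h).2
  calc ‖c k‖ ^ p * ∑' n, ‖Φ (xs k n)‖ ^ p
      = ∑' n, ‖Φ (weightedConcat c xs (Nat.pair k n))‖ ^ p := by
        simp only [weightedConcat_pair, norm_apply_smul_rpow, tsum_mul_left]
    _ ≤ ∑' m, ‖Φ (weightedConcat c xs m)‖ ^ p :=
        tsum_comp_le_tsum_of_inj hs (fun _ => by positivity) hinj

end WeightedConcat

def midSum (𝕜 : Type*) [RCLike 𝕜] {E : Type*} [NormedAddCommGroup E] [NormedSpace 𝕜 E]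
    (q p : ℝ) (x : ℕ → E) (xs : ℕ → StrongDual 𝕜 E) : ℝ :=
  ∑' j, (∑' n, ‖xs n (x j)‖ ^ p) ^ (q / p)

section MidSum

variable [RCLike 𝕜] [NormedAddCommGroup E] [NormedSpace 𝕜 E] {p q r : ℝ} {x : ℕ → E}

theorem midSum_nonneg (xs : ℕ → StrongDual 𝕜 E) : 0 ≤ midSum 𝕜 q p x xs :=
  tsum_nonneg fun _ => Real.rpow_nonneg (tsum_nonneg fun _ => by positivity) _

theorem rpow_div_rpow_div {A : ℝ} (hA : 0 ≤ A) (hq : q ≠ 0) :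
    (A ^ (q / p)) ^ (r / q) = A ^ (r / p) := by
  rw [← Real.rpow_mul hA]
  congr 1
  field_simp

theorem MidSummable.of_le (hq : 0 < q) (hqr : q ≤ r) (hx : MidSummable 𝕜 q p x) :
    MidSummable 𝕜 r p x := fun xs hxs =>
  ((hx xs hxs).rpow_of_one_le (fun _ => by positivity) ((one_le_div hq).2 hqr)).congr fun _ =>
    rpow_div_rpow_div (tsum_nonneg fun _ => by positivity) hq.ne'

theorem midSum_rpow_one_div_le (hq : 0 < q) (hqr : q ≤ r) {xs : ℕ → StrongDual 𝕜 E}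
    (hxs : Summable fun j => (∑' n, ‖xs n (x j)‖ ^ p) ^ (q / p)) :
    midSum 𝕜 r p x xs ^ (1 / r) ≤ midSum 𝕜 q p x xs ^ (1 / q) := by
  have hr : 0 < r := hq.trans_le hqr
  have hsum : midSum 𝕜 r p x xs ≤ midSum 𝕜 q p x xs ^ (r / q) := by
    rw [midSum, midSum]
    convert tsum_rpow_le_rpow_tsum (fun _ => by positivity) hxs ((one_le_div hq).2 hqr) using 3
      with j
    exact (rpow_div_rpow_div (tsum_nonneg fun _ => by positivity) hq.ne').symm
  calc midSum 𝕜 r p x xs ^ (1 / r) ≤ (midSum 𝕜 q p x xs ^ (r / q)) ^ (1 / r) := by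
        gcongr
        exact midSum_nonneg xs
    _ = midSum 𝕜 q p x xs ^ (1 / q) := by
        rw [← Real.rpow_mul (midSum_nonneg xs)]
        field_simp

theorem rpow_mul_midSum_le (hp : 0 ≤ p) (hq : 0 ≤ q) (hx : MidSummable 𝕜 q p x)
    {xs ys : ℕ → StrongDual 𝕜 E} (hxs : WeaklySummable 𝕜 p xs) (hys : WeaklySummable 𝕜 p ys)
    {a : ℝ} (ha : 0 ≤ a) (hle : ∀ j, a * ∑' n, ‖xs n (x j)‖ ^ p ≤ ∑' n, ‖ys n (x j)‖ ^ p) :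
    a ^ (q / p) * midSum 𝕜 q p x xs ≤ midSum 𝕜 q p x ys := by
  have hqp : 0 ≤ q / p := div_nonneg hq hp
  rw [midSum, midSum, ← tsum_mul_left]
  refine Summable.tsum_le_tsum (fun j => ?_) ((hx xs hxs).mul_left _) (hx ys hys)
  have hA : 0 ≤ ∑' n, ‖xs n (x j)‖ ^ p := tsum_nonneg fun _ => by positivity
  rw [← Real.mul_rpow ha hA]
  exact Real.rpow_le_rpow (mul_nonneg ha hA) (hle j) hqp

end MidSum

section GlidingHump

variable [RCLike 𝕜] [NormedAddCommGroup E] [NormedSpace 𝕜 E] {p q : ℝ} {x : ℕ → E}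

theorem summable_norm_two_inv_pow_rpow (hp : 0 < p) :
    Summable fun k : ℕ => ‖(2⁻¹ : 𝕜) ^ k‖ ^ p := by
  have hratio : (2⁻¹ : ℝ) ^ p < 1 := Real.rpow_lt_one (by norm_num) (by norm_num) hp
  refine (summable_geometric_of_lt_one (by positivity) hratio).congr fun k => ?_
  rw [norm_pow, norm_inv, RCLike.norm_two, Real.rpow_pow_comm (by norm_num)]

/-- Gliding hump: were the sums unbounded, gluing unit-ball sequences `xs k` with large sums,
scaled by `2⁻ᵏ`, would give a single weakly `p`-summable sequence with infinite mid sum. -/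
theorem MidSummable.bddAbove_midSum [Fact (1 ≤ p)] (hq : 0 ≤ q) (hx : MidSummable 𝕜 q p x) :
    BddAbove (Set.range fun xs : {xs : ℕ → StrongDual 𝕜 E //
      WeaklySummable 𝕜 p xs ∧ weakNorm 𝕜 p xs ≤ 1} => midSum 𝕜 q p x xs.1) := by
  have hp : 0 < p := zero_lt_one.trans_le Fact.out
  by_contra hunb
  rw [not_bddAbove_iff] at hunb
  let c : ℕ → 𝕜 := fun k => (2⁻¹ : 𝕜) ^ k
  have hc : ∀ k, 0 < ‖c k‖ ^ p := fun k => Real.rpow_pos_of_pos (by simp [c]) p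
  have hlarge : ∀ k : ℕ, ∃ xs : {xs : ℕ → StrongDual 𝕜 E //
      WeaklySummable 𝕜 p xs ∧ weakNorm 𝕜 p xs ≤ 1},
      k < (‖c k‖ ^ p) ^ (q / p) * midSum 𝕜 q p x xs.1 := fun k => by
    obtain ⟨_, ⟨xs, rfl⟩, hxs⟩ := hunb (k / (‖c k‖ ^ p) ^ (q / p))
    exact ⟨xs, (div_lt_iff₀' (Real.rpow_pos_of_pos (hc k) _)).1 hxs⟩
  choose xs hxs using hlarge
  have hys : WeaklySummable 𝕜 p (weightedConcat c fun k => (xs k).1) :=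
    .weightedConcat (fun k => (xs k).2.1) (fun k => (xs k).2.2)
      (summable_norm_two_inv_pow_rpow hp)
  obtain ⟨k, hk⟩ := exists_nat_gt (midSum 𝕜 q p x (weightedConcat c fun k => (xs k).1))
  refine (hk.trans (hxs k)).not_ge (rpow_mul_midSum_le hp.le hq hx (xs k).2.1 hys (hc k).le ?_)
  exact fun j => mul_tsum_le_tsum_weightedConcat (ContinuousLinearMap.apply 𝕜 𝕜 (x j))
    (hys (ContinuousLinearMap.apply 𝕜 𝕜 (x j))) k

end GlidingHump

theorem stmt3_general [RCLike 𝕜] [NormedAddCommGroup E] [NormedSpace 𝕜 E]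
    (p q r : ℝ) (hp : 1 ≤ p) (hq : 1 ≤ q) (hqr : q ≤ r) (x : ℕ → E) (hx : MidSummable 𝕜 q p x) :
    MidSummable 𝕜 r p x ∧ midNorm 𝕜 r p x ≤ midNorm 𝕜 q p x := by
  have : Fact (1 ≤ p) := ⟨hp⟩
  have hp0 : p ≠ 0 := by positivity
  have hq0 : 0 < q := by positivity
  refine ⟨hx.of_le hq0 hqr, ?_⟩
  have : Nonempty {xs : ℕ → StrongDual 𝕜 E // WeaklySummable 𝕜 p xs ∧ weakNorm 𝕜 p xs ≤ 1} :=
    ⟨⟨0, weaklySummable_zero hp0, (weakNorm_zero hp0).trans_le zero_le_one⟩⟩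
  obtain ⟨B, hB⟩ := hx.bddAbove_midSum hq0.le
  refine ciSup_mono ⟨B ^ (1 / q), ?_⟩ fun xs => midSum_rpow_one_div_le hq0 hqr (hx xs.1 xs.2.1)
  rintro _ ⟨xs, rfl⟩
  exact Real.rpow_le_rpow (midSum_nonneg _) (hB ⟨xs, rfl⟩) (by positivity)

/-- if `q ≤ r` then every mid `(q,p)`-summable sequence is mid `(r,p)`-summable
with `‖(x_j)‖_{r,p} ≤ ‖(x_j)‖_{q,p}`. -/
theorem stmt3 [RCLike 𝕜] [NormedAddCommGroup E] [NormedSpace 𝕜 E] [CompleteSpace E]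
    (p q r : ℝ) (hp : 1 ≤ p) (hq : 1 ≤ q) (hqr : q ≤ r) (x : ℕ → E) (hx : MidSummable 𝕜 q p x) :
    MidSummable 𝕜 r p x ∧ midNorm 𝕜 r p x ≤ midNorm 𝕜 q p x :=
  stmt3_general p q r hp hq hqr x hx
end
end

section
/- Let E be a Banach space and 1 ≤ p, q < ∞. Every weakly q-summable sequence in E is mid (q,p)-summable if and only if every bounded linear operator from E into ℓ_p is absolutely q-summing. -/
/-!
Both directions pass through operators `E → ℓ_p`. A weakly `p`-summable sequence `(x_n^*)` in `E^*`
is the same thing as the bounded operator `v x = (x_n^*(x))_n : E → ℓ_p` (bounded by the closed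
graph theorem), with `‖v x_j‖^q = (∑_n |x_n^*(x_j)|^p)^{q/p}`; conversely the coordinates of any
`u : E → ℓ_p` are weakly `p`-summable in `E^*` by Hölder's inequality. Hence the left-hand side says
exactly that every `u : E → ℓ_p` maps weakly `q`-summable sequences to `q`-summable ones.

An absolutely `q`-summing operator does this, because a weakly `q`-summable sequence has bounded
weak `q`-norm (the closed graph theorem again, now on `E^*`). Conversely, if `u` is not absolutely
`q`-summing, there are finite blocks `z_m` with `∑_m ‖z_m‖_{w,q}^q < ∞` whose images have
`q`-norm at least `1`; concatenating them gives a weakly `q`-summable sequence whose image is not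
`q`-summable.
-/

open NormedSpace MeasureTheory

noncomputable section

section lp

variable {α : Type*} {E : α → Type*} [∀ i, NormedAddCommGroup (E i)] {r : ℝ}

@[simp]
lemma lp.evalCLM_apply {𝕜 : Type*} [NormedField 𝕜] [∀ i, NormedSpace 𝕜 (E i)] {p : ENNReal}
    [Fact (1 ≤ p)] (i : α) (f : lp E p) : lp.evalCLM 𝕜 E p i f = f i :=
  rfl

lemma lp.tsum_norm_rpow_rpow_div (hr : 0 < r) (s : ℝ) (f : lp E (ENNReal.ofReal r)) :
    (∑' i, ‖f i‖ ^ r) ^ (s / r) = ‖f‖ ^ s := by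
  have := lp.norm_rpow_eq_tsum (by rwa [ENNReal.toReal_ofReal hr.le]) f
  rw [ENNReal.toReal_ofReal hr.le] at this
  rw [← this, ← Real.rpow_mul (lp.norm_nonneg' f), mul_div_cancel₀ _ hr.ne']

lemma lp.sum_rpow_rpow_inv_le_norm (hr : 0 < r) (f : lp E (ENNReal.ofReal r)) (s : Finset α) :
    (∑ i ∈ s, ‖f i‖ ^ r) ^ r⁻¹ ≤ ‖f‖ := by
  have := lp.sum_rpow_le_norm_rpow (by rwa [ENNReal.toReal_ofReal hr.le]) f s
  rw [ENNReal.toReal_ofReal hr.le] at this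
  exact (Real.rpow_inv_le_iff_of_pos (Finset.sum_nonneg fun i _ => by positivity)
    (lp.norm_nonneg' f) hr).mpr this

end lp

lemma exists_clm_lp_of_summable {𝕜 X α : Type*} [RCLike 𝕜] [NormedAddCommGroup X]
    [NormedSpace 𝕜 X] [CompleteSpace X] {r : ℝ} [Fact (1 ≤ ENNReal.ofReal r)]
    (T : α → StrongDual 𝕜 X) (hT : ∀ x, Summable fun i => ‖T i x‖ ^ r) :
    ∃ v : X →L[𝕜] lp (fun _ : α => 𝕜) (ENNReal.ofReal r), ∀ x i, v x i = T i x := by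
  have hr : ENNReal.toReal (ENNReal.ofReal r) = r :=
    ENNReal.toReal_ofReal (ENNReal.one_le_ofReal.mp Fact.out |>.trans' zero_le_one)
  let v : X →ₗ[𝕜] lp (fun _ : α => 𝕜) (ENNReal.ofReal r) :=
    { toFun x := ⟨fun i => T i x, memℓp_gen (by rw [hr]; exact hT x)⟩
      map_add' x y := lp.ext <| funext fun i => map_add (T i) x y
      map_smul' c x := lp.ext <| funext fun i => map_smul (T i) c x }
  refine ⟨⟨v, v.continuous_of_seq_closed_graph fun u x y hu hvu => ?_⟩, fun x i => rfl⟩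
  refine lp.ext <| funext fun i => tendsto_nhds_unique ?_ (((T i).continuous.tendsto x).comp hu)
  exact ((lp.evalCLM 𝕜 (fun _ : α => 𝕜) (ENNReal.ofReal r) i).continuous.tendsto y).comp hvu

lemma le_rpow_of_le_mul_rpow_one_sub_inv {S M r : ℝ} (hS : 0 ≤ S) (hM : 0 ≤ M) (hr : 0 < r)
    (h : S ≤ M * S ^ (1 - r⁻¹)) : S ≤ M ^ r := by
  rcases hS.eq_or_lt with rfl | hS
  · positivity
  rw [Real.rpow_sub hS, Real.rpow_one, mul_div_assoc', le_div_iff₀ (by positivity), mul_comm M,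
    mul_le_mul_iff_right₀ hS] at h
  exact (Real.rpow_inv_le_iff_of_pos hS.le hM hr).mp h

section Holder

variable {𝕜 α : Type*} [RCLike 𝕜] {r : ℝ} [Fact (1 ≤ ENNReal.ofReal r)]

lemma norm_sum_smul_evalCLM_le (s : Finset α) (b c : α → 𝕜)
    (hc : ∀ i, ‖c i‖ = ‖b i‖ ^ r / ‖b i‖) :
    ‖∑ i ∈ s, c i • lp.evalCLM 𝕜 (fun _ : α => 𝕜) (ENNReal.ofReal r) i‖ ≤
      (∑ i ∈ s, ‖b i‖ ^ r) ^ (1 - r⁻¹) := by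
  have hr : 1 ≤ r := ENNReal.one_le_ofReal.mp Fact.out
  refine ContinuousLinearMap.opNorm_le_bound _ (by positivity) fun f => ?_
  have hweight : ∀ i, ‖c i‖ * ‖f i‖ = ‖b i‖ ^ r * (‖f i‖ / ‖b i‖) := fun i => by rw [hc]; ring
  have hpow : ∀ i, ‖b i‖ ^ r * (‖f i‖ / ‖b i‖) ^ r ≤ ‖f i‖ ^ r := fun i => by
    rcases eq_or_ne ‖b i‖ 0 with h | h
    · simp [h, Real.zero_rpow (by linarith : r ≠ 0)]; positivity
    · rw [Real.div_rpow (norm_nonneg _) (norm_nonneg _), mul_div_cancel₀ _ (by positivity)]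
  calc ‖(∑ i ∈ s, c i • lp.evalCLM 𝕜 (fun _ : α => 𝕜) (ENNReal.ofReal r) i) f‖
      ≤ ∑ i ∈ s, ‖c i‖ * ‖f i‖ := by simpa using norm_sum_le s fun i => c i * f i
    _ = ∑ i ∈ s, ‖b i‖ ^ r * (‖f i‖ / ‖b i‖) := Finset.sum_congr rfl fun i _ => hweight i
    _ ≤ (∑ i ∈ s, ‖b i‖ ^ r) ^ (1 - r⁻¹) * (∑ i ∈ s, ‖b i‖ ^ r * (‖f i‖ / ‖b i‖) ^ r) ^ r⁻¹ :=
        Real.inner_le_weight_mul_Lp_of_nonneg s hr _ _ (fun i => by positivity)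
          (fun i => by positivity)
    _ ≤ (∑ i ∈ s, ‖b i‖ ^ r) ^ (1 - r⁻¹) * ‖f‖ := by
        gcongr
        exact (Real.rpow_le_rpow (Finset.sum_nonneg fun i _ => by positivity)
          (Finset.sum_le_sum fun i _ => hpow i) (by positivity)).trans
          (lp.sum_rpow_rpow_inv_le_norm (by linarith) f s)

lemma sum_norm_rpow_apply_evalCLM_le
    (Ψ : StrongDual 𝕜 (StrongDual 𝕜 (lp (fun _ : α => 𝕜) (ENNReal.ofReal r)))) (s : Finset α) :
    ∑ i ∈ s, ‖Ψ (lp.evalCLM 𝕜 (fun _ : α => 𝕜) (ENNReal.ofReal r) i)‖ ^ r ≤ ‖Ψ‖ ^ r := by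
  have hr : 0 < r := zero_lt_one.trans_le (ENNReal.one_le_ofReal.mp Fact.out)
  set e := lp.evalCLM 𝕜 (fun _ : α => 𝕜) (ENNReal.ofReal r)
  set b : α → 𝕜 := fun i => Ψ (e i)
  -- the extremal vector of Hölder's inequality for `b`: `c i * b i = ‖b i‖ ^ r`
  set c : α → 𝕜 := fun i => starRingEnd 𝕜 (b i) * ((‖b i‖ ^ r / ‖b i‖ ^ 2 : ℝ) : 𝕜)
  have hcb : ∀ i, c i * b i = ((‖b i‖ ^ r : ℝ) : 𝕜) := fun i => by
    rcases eq_or_ne (b i) 0 with h | h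
    · simp [c, h, Real.zero_rpow hr.ne']
    · rw [mul_right_comm, RCLike.conj_mul, ← RCLike.ofReal_pow, ← RCLike.ofReal_mul,
        mul_div_cancel₀ _ (by positivity)]
  have hc : ∀ i, ‖c i‖ = ‖b i‖ ^ r / ‖b i‖ := fun i => by
    rcases eq_or_ne (b i) 0 with h | h
    · simp [c, h]
    · have : 0 < ‖b i‖ := norm_pos_iff.mpr h
      simp only [c, norm_mul, RCLike.norm_conj, RCLike.norm_ofReal]
      rw [abs_of_nonneg (by positivity)]
      field_simp
  set S := ∑ i ∈ s, ‖b i‖ ^ r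
  have hΨ : Ψ (∑ i ∈ s, c i • e i) = (S : 𝕜) := by
    rw [map_sum, RCLike.ofReal_sum]
    exact Finset.sum_congr rfl fun i _ => by rw [map_smul, smul_eq_mul]; exact hcb i
  refine le_rpow_of_le_mul_rpow_one_sub_inv (by positivity) Ψ.opNorm_nonneg hr ?_
  calc S = ‖Ψ (∑ i ∈ s, c i • e i)‖ := by
        rw [hΨ, RCLike.norm_ofReal, abs_of_nonneg (by positivity)]
    _ ≤ ‖Ψ‖ * ‖∑ i ∈ s, c i • e i‖ := Ψ.le_opNorm _
    _ ≤ ‖Ψ‖ * S ^ (1 - r⁻¹) := by gcongr; exact norm_sum_smul_evalCLM_le s b c hc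

lemma weaklySummable_evalCLM :
    WeaklySummable 𝕜 r (lp.evalCLM 𝕜 (fun _ : ℕ => 𝕜) (ENNReal.ofReal r)) := fun Ψ =>
  summable_of_sum_range_le (fun _ => by positivity) fun _ => sum_norm_rpow_apply_evalCLM_le Ψ _

end Holder

section Weak

variable {𝕜 X Y : Type*} [RCLike 𝕜] [NormedAddCommGroup X] [NormedSpace 𝕜 X]
  [NormedAddCommGroup Y] [NormedSpace 𝕜 Y]

lemma WeaklySummable.map {p : ℝ} {x : ℕ → X} (hx : WeaklySummable 𝕜 p x) (L : X →L[𝕜] Y) :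
    WeaklySummable 𝕜 p fun j => L (x j) :=
  fun φ => hx (φ.comp L)

lemma WeaklySummable.summable_apply {p : ℝ} {φ : ℕ → StrongDual 𝕜 X}
    (hφ : WeaklySummable 𝕜 p φ) (x : X) : Summable fun n => ‖φ n x‖ ^ p :=
  hφ (inclusionInDoubleDual 𝕜 X x)

lemma WeaklySummable.exists_clm_lp {q : ℝ} [Fact (1 ≤ ENNReal.ofReal q)] {x : ℕ → X}
    (hx : WeaklySummable 𝕜 q x) :
    ∃ w : StrongDual 𝕜 X →L[𝕜] lp (fun _ : ℕ => 𝕜) (ENNReal.ofReal q), ∀ φ j, w φ j = φ (x j) :=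
  exists_clm_lp_of_summable (fun j => inclusionInDoubleDual 𝕜 X (x j)) hx

end Weak

lemma exists_nat_summable_comp_iff {ι M : Type*} [Countable ι] [Zero M] (y : ι → M) :
    ∃ x : ℕ → M, ∀ f : M → ℝ, f 0 = 0 →
      ((Summable fun n => f (x n)) ↔ Summable fun i => f (y i)) := by
  obtain ⟨e, he⟩ := Countable.exists_injective_nat ι
  refine ⟨Function.extend e y 0, fun f hf => ?_⟩
  rw [← he.summable_iff (f := fun n => f (Function.extend e y 0 n)) fun n hn => ?_]
  · simp [Function.comp_def, he.extend_apply]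
  · simp [Function.extend_apply' _ _ _ (by simpa using hn), hf]

section Summing

variable {𝕜 X Y : Type*} [RCLike 𝕜] [NormedAddCommGroup X] [NormedSpace 𝕜 X]
  [NormedAddCommGroup Y] [NormedSpace 𝕜 Y]

lemma rpow_sum_norm_rpow_smul {ι : Type*} [Fintype ι] {q : ℝ} (hq : 0 < q) (a : 𝕜)
    (g : ι → Y) : (∑ j, ‖a • g j‖ ^ q) ^ (1 / q) = ‖a‖ * (∑ j, ‖g j‖ ^ q) ^ (1 / q) := by
  simp only [norm_smul, Real.mul_rpow (norm_nonneg a) (norm_nonneg _), ← Finset.mul_sum]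
  rw [Real.mul_rpow (by positivity) (by positivity), one_div,
    Real.rpow_rpow_inv (norm_nonneg a) hq.ne']

variable (𝕜) in
def finiteWeakNorm (q : ℝ) {k : ℕ} (z : Fin k → X) : ℝ :=
  ⨆ φ : {φ : StrongDual 𝕜 X // ‖φ‖ ≤ 1}, (∑ j, ‖φ.1 (z j)‖ ^ q) ^ (1 / q)

lemma finiteWeakNorm_nonneg (q : ℝ) {k : ℕ} (z : Fin k → X) : 0 ≤ finiteWeakNorm 𝕜 q z :=
  Real.iSup_nonneg fun _ => by positivity

lemma rpow_sum_le_mul_finiteWeakNorm {q : ℝ} (hq : 0 < q) {k : ℕ} (z : Fin k → X)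
    (φ : StrongDual 𝕜 X) : (∑ j, ‖φ (z j)‖ ^ q) ^ (1 / q) ≤ ‖φ‖ * finiteWeakNorm 𝕜 q z := by
  have hbdd : BddAbove (Set.range fun ψ : {ψ : StrongDual 𝕜 X // ‖ψ‖ ≤ 1} =>
      (∑ j, ‖ψ.1 (z j)‖ ^ q) ^ (1 / q)) := by
    refine ⟨(∑ j, ‖z j‖ ^ q) ^ (1 / q), Set.forall_mem_range.mpr fun ψ => ?_⟩
    gcongr with j
    exact ψ.1.le_of_opNorm_le ψ.2 (z j) |>.trans_eq (one_mul _)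
  rcases eq_or_ne φ 0 with rfl | hφ
  · simp [Real.zero_rpow hq.ne', Real.zero_rpow (inv_ne_zero hq.ne')]
  have hφ : 0 < ‖φ‖ := norm_pos_iff.mpr hφ
  have hψ : ‖((‖φ‖⁻¹ : ℝ) : 𝕜) • φ‖ ≤ 1 := by
    rw [norm_smul, RCLike.norm_ofReal, abs_inv, abs_norm, inv_mul_cancel₀ hφ.ne']
  have := le_ciSup hbdd ⟨_, hψ⟩
  simp only [smul_apply, rpow_sum_norm_rpow_smul hq, RCLike.norm_ofReal, abs_inv,
    abs_norm] at this
  rwa [inv_mul_le_iff₀ hφ] at this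

lemma AbsolutelySumming.summable_norm_rpow {q : ℝ} [Fact (1 ≤ ENNReal.ofReal q)]
    {u : X →L[𝕜] Y} (hu : AbsolutelySumming 𝕜 q u) {x : ℕ → X} (hx : WeaklySummable 𝕜 q x) :
    Summable fun j => ‖u (x j)‖ ^ q := by
  have hq : 0 < q := zero_lt_one.trans_le (ENNReal.one_le_ofReal.mp Fact.out)
  obtain ⟨C, hC, hCu⟩ := hu
  obtain ⟨w, hw⟩ := hx.exists_clm_lp
  refine summable_of_sum_range_le (c := (C * ‖w‖) ^ q) (fun _ => by positivity) fun k => ?_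
  have hW : finiteWeakNorm 𝕜 q (fun j : Fin k => x j) ≤ ‖w‖ := by
    have : Nonempty {φ : StrongDual 𝕜 X // ‖φ‖ ≤ 1} := ⟨⟨0, by simp⟩⟩
    refine ciSup_le fun φ => ?_
    calc (∑ j : Fin k, ‖φ.1 (x j)‖ ^ q) ^ (1 / q)
        = (∑ j ∈ Finset.range k, ‖w φ.1 j‖ ^ q) ^ q⁻¹ := by
          simp only [hw, one_div, Fin.sum_univ_eq_sum_range (fun j => ‖φ.1 (x j)‖ ^ q)]
      _ ≤ ‖w φ.1‖ := lp.sum_rpow_rpow_inv_le_norm hq _ _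
      _ ≤ ‖w‖ := (w.le_opNorm_of_le φ.2).trans_eq (mul_one _)
  have := (hCu k fun j => x j).trans (mul_le_mul_of_nonneg_left hW hC.le)
  rwa [one_div, Real.rpow_inv_le_iff_of_pos (by positivity) (by positivity) hq,
    Fin.sum_univ_eq_sum_range (fun j => ‖u (x j)‖ ^ q)] at this

lemma exists_block_of_not_absolutelySumming {q : ℝ} (hq : 0 < q) {u : X →L[𝕜] Y}
    (hu : ¬ AbsolutelySumming 𝕜 q u) {ε : ℝ} (hε : 0 < ε) :
    ∃ (k : ℕ) (z : Fin k → X), 1 ≤ ∑ j, ‖u (z j)‖ ^ q ∧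
      ∀ φ : StrongDual 𝕜 X, ∑ j, ‖φ (z j)‖ ^ q ≤ ‖φ‖ ^ q * ε := by
  simp only [AbsolutelySumming, not_exists, not_and, not_forall, not_le] at hu
  set δ := ε ^ q⁻¹
  have hδ : 0 < δ := by positivity
  obtain ⟨k, z, hz⟩ := hu δ⁻¹ (inv_pos.mpr hδ)
  change δ⁻¹ * finiteWeakNorm 𝕜 q z < _ at hz
  set A := (∑ j, ‖u (z j)‖ ^ q) ^ (1 / q)
  have hA : 0 < A := hz.trans_le' (by have := finiteWeakNorm_nonneg (𝕜 := 𝕜) q z; positivity)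
  refine ⟨k, fun j => ((A⁻¹ : ℝ) : 𝕜) • z j, ?_, fun φ => ?_⟩
  · have : (∑ j, ‖u (((A⁻¹ : ℝ) : 𝕜) • z j)‖ ^ q) ^ (1 / q) = 1 := by
      simp only [map_smul, rpow_sum_norm_rpow_smul hq, RCLike.norm_ofReal, abs_inv,
        abs_of_pos hA, inv_mul_cancel₀ hA.ne', A]
    rw [one_div] at this
    simpa using (Real.le_rpow_inv_iff_of_pos zero_le_one (by positivity) hq).mp this.ge
  · have hW : A⁻¹ * finiteWeakNorm 𝕜 q z ≤ δ := by
      rw [inv_mul_le_iff₀ hA]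
      exact ((inv_mul_lt_iff₀ hδ).mp hz).le.trans_eq (mul_comm _ _)
    have key : (∑ j, ‖φ (((A⁻¹ : ℝ) : 𝕜) • z j)‖ ^ q) ^ (1 / q) ≤ ‖φ‖ * δ := by
      simp only [map_smul, rpow_sum_norm_rpow_smul hq, RCLike.norm_ofReal, abs_inv,
        abs_of_pos hA]
      calc A⁻¹ * (∑ j, ‖φ (z j)‖ ^ q) ^ (1 / q)
          ≤ A⁻¹ * (‖φ‖ * finiteWeakNorm 𝕜 q z) := by
            gcongr; exact rpow_sum_le_mul_finiteWeakNorm hq z φ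
        _ = ‖φ‖ * (A⁻¹ * finiteWeakNorm 𝕜 q z) := by ring
        _ ≤ ‖φ‖ * δ := by gcongr
    rwa [one_div, Real.rpow_inv_le_iff_of_pos (by positivity) (by positivity) hq,
      Real.mul_rpow (norm_nonneg _) hδ.le, Real.rpow_inv_rpow hε.le hq.ne'] at key

lemma exists_weaklySummable_not_summable_of_blocks {q : ℝ} (hq : 0 < q) (u : X →L[𝕜] Y)
    {k : ℕ → ℕ} (z : ∀ m, Fin (k m) → X) {ε : ℕ → ℝ} (hε : Summable ε)
    (hzu : ∀ m, 1 ≤ ∑ j, ‖u (z m j)‖ ^ q)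
    (hzφ : ∀ m (φ : StrongDual 𝕜 X), ∑ j, ‖φ (z m j)‖ ^ q ≤ ‖φ‖ ^ q * ε m) :
    ∃ x : ℕ → X, WeaklySummable 𝕜 q x ∧ ¬ Summable fun j => ‖u (x j)‖ ^ q := by
  obtain ⟨x, hx⟩ := exists_nat_summable_comp_iff fun s : (m : ℕ) × Fin (k m) => z s.1 s.2
  refine ⟨x, fun φ => ?_, fun hux => ?_⟩
  · rw [hx (fun y => ‖φ y‖ ^ q) (by simp [Real.zero_rpow hq.ne']),
      summable_sigma_of_nonneg fun _ => by positivity]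
    refine ⟨fun m => .of_finite, (hε.mul_left (‖φ‖ ^ q)).of_nonneg_of_le
      (fun m => by positivity) fun m => ?_⟩
    simpa only [tsum_fintype] using hzφ m φ
  · rw [hx (fun y => ‖u y‖ ^ q) (by simp [Real.zero_rpow hq.ne']),
      summable_sigma_of_nonneg fun _ => by positivity] at hux
    obtain ⟨m, hm⟩ := (hux.2.tendsto_atTop_zero.eventually_lt_const one_pos).exists
    simp only [tsum_fintype] at hm
    exact (hzu m).not_gt hm

lemma absolutelySumming_of_summable {q : ℝ} (hq : 0 < q) {u : X →L[𝕜] Y}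
    (hu : ∀ x : ℕ → X, WeaklySummable 𝕜 q x → Summable fun j => ‖u (x j)‖ ^ q) :
    AbsolutelySumming 𝕜 q u := by
  by_contra h
  choose k z hzu hzφ using fun m : ℕ =>
    exists_block_of_not_absolutelySumming hq h (ε := (1 / 2) ^ m) (by positivity)
  obtain ⟨x, hx, hux⟩ :=
    exists_weaklySummable_not_summable_of_blocks hq u z summable_geometric_two hzu hzφ
  exact hux (hu x hx)

end Summing

variable {𝕜 E F : Type*}

theorem stmt4_general [RCLike 𝕜] [NormedAddCommGroup E] [NormedSpace 𝕜 E] [CompleteSpace E]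
    (p q : ℝ) (hq : 1 ≤ q) [Fact (1 ≤ ENNReal.ofReal p)] :
    (∀ x : ℕ → E, WeaklySummable 𝕜 q x → MidSummable 𝕜 q p x) ↔
      ∀ u : E →L[𝕜] lp (fun _ : ℕ => 𝕜) (ENNReal.ofReal p), AbsolutelySumming 𝕜 q u := by
  have hp : 0 < p := zero_lt_one.trans_le (ENNReal.one_le_ofReal.mp Fact.out)
  have : Fact (1 ≤ ENNReal.ofReal q) := ⟨ENNReal.one_le_ofReal.mpr hq⟩
  constructor
  · intro H u
    refine absolutelySumming_of_summable (zero_lt_one.trans_le hq) fun x hx => ?_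
    have hcoord := weaklySummable_evalCLM.map ((ContinuousLinearMap.compL 𝕜 E _ 𝕜).flip u)
    simpa [lp.tsum_norm_rpow_rpow_div hp] using H x hx _ hcoord
  · intro H x hx xs hxs
    obtain ⟨v, hv⟩ := exists_clm_lp_of_summable xs hxs.summable_apply
    simpa [← hv, lp.tsum_norm_rpow_rpow_div hp] using (H v).summable_norm_rpow hx

/-- every weakly `q`-summable sequence in `E` is mid `(q,p)`-summable iff every
bounded linear operator `E → ℓ_p` is absolutely `q`-summing. -/
theorem stmt4 [RCLike 𝕜] [NormedAddCommGroup E] [NormedSpace 𝕜 E] [CompleteSpace E]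
    (p q : ℝ) (hp : 1 ≤ p) (hq : 1 ≤ q) [Fact (1 ≤ ENNReal.ofReal p)] :
    (∀ x : ℕ → E, WeaklySummable 𝕜 q x → MidSummable 𝕜 q p x) ↔
      ∀ u : E →L[𝕜] lp (fun _ : ℕ => 𝕜) (ENNReal.ofReal p), AbsolutelySumming 𝕜 q u :=
  stmt4_general p q hq
end
end

section
/- Let E be a Banach space and 1 ≤ p ≤ q < ∞. Let x = (x_j)_{j=1}^∞ be a weakly q-summable sequence in E such that the operator Ψ_x : E* → ℓ_q, Ψ_x(x*) = (x*(x_j))_{j=1}^∞, is absolutely p-summing. Then (x_j)_{j=1}^∞ is mid (q,p)-summable and ‖(x_j)‖_{q,p} ≤ π_p(Ψ_x). -/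
/-!
If `Ψ` is `p`-summing with constant `C`, it sends a weakly `p`-summable sequence `(x_n^*)` in `E*`,
whose weak norm `M` is finite by Banach–Steinhaus, to a strongly `p`-summable one:
`∑_n ‖Ψ x_n^*‖^p ≤ (C M)^p`. The rows `(|x_n^*(x_j)|^p)_j` have `ℓ_{q/p}`-norm `‖Ψ x_n^*‖_q^p`, so
Minkowski's inequality in `ℓ_{q/p}` gives
`∑_j (∑_n |x_n^*(x_j)|^p)^{q/p} ≤ (∑_n ‖Ψ x_n^*‖^p)^{q/p} ≤ (C M)^q`.
-/

open NormedSpace MeasureTheory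

noncomputable section

/-- The admissible constants in the definition of `AbsolutelySumming` and `piNorm`. -/
def IsSummingConstant (𝕜 : Type*) [RCLike 𝕜] {X Y : Type*} [NormedAddCommGroup X]
    [NormedSpace 𝕜 X] [NormedAddCommGroup Y] [NormedSpace 𝕜 Y] (p : ℝ)
    (u : X →L[𝕜] Y) (C : ℝ) : Prop :=
  ∀ (k : ℕ) (z : Fin k → X),
    (∑ j, ‖u (z j)‖ ^ p) ^ (1 / p) ≤
      C * ⨆ φ : {φ : StrongDual 𝕜 X // ‖φ‖ ≤ 1}, (∑ j, ‖φ.1 (z j)‖ ^ p) ^ (1 / p)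

theorem weakNorm_nonneg_s7 (𝕜 : Type*) [RCLike 𝕜] {E : Type*} [NormedAddCommGroup E]
    [NormedSpace 𝕜 E] (p : ℝ) (x : ℕ → E) : 0 ≤ weakNorm 𝕜 p x :=
  Real.iSup_nonneg fun _ => by positivity

theorem rpow_tsum_le_of_forall_finset {ι : Type*} {f : ι → ℝ} (hf : Summable f) {t C : ℝ}
    (ht : 0 ≤ t) (h : ∀ s : Finset ι, (∑ i ∈ s, f i) ^ t ≤ C) : (∑' i, f i) ^ t ≤ C :=
  le_of_tendsto' (hf.hasSum.rpow_const (.inr ht)) h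

/-- Minkowski's inequality for the mixed norm `ℓ_r(ℓ_1)`. -/
theorem summable_rpow_tsum_and_tsum_le {ι κ : Type*} {r : ℝ} (hr : 1 ≤ r) {a : ι → κ → ℝ}
    (ha : ∀ n j, 0 ≤ a n j) (hrow : ∀ n, Summable fun j => a n j ^ r)
    (hnorm : Summable fun n => (∑' j, a n j ^ r) ^ (1 / r)) :
    Summable (fun j => (∑' n, a n j) ^ r) ∧
      ∑' j, (∑' n, a n j) ^ r ≤ (∑' n, (∑' j, a n j ^ r) ^ (1 / r)) ^ r := by
  have : Fact (1 ≤ ENNReal.ofReal r) := ⟨ENNReal.one_le_ofReal.2 hr⟩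
  have hr0 : 0 < r := one_pos.trans_le hr
  have hrr : (ENNReal.ofReal r).toReal = r := ENNReal.toReal_ofReal hr0.le
  have hr' : 0 < (ENNReal.ofReal r).toReal := hrr.symm ▸ hr0
  -- the triangle inequality for the series in `ℓ_r` whose terms are the rows of `a`
  let v : ι → lp (fun _ : κ => ℝ) (ENNReal.ofReal r) := fun n =>
    ⟨a n, memℓp_gen <| by simpa [hrr, abs_of_nonneg (ha n _)] using hrow n⟩
  have hv : ∀ n, ‖v n‖ = (∑' j, a n j ^ r) ^ (1 / r) := fun n => by
    simp [lp.norm_eq_tsum_rpow hr', hrr, v, abs_of_nonneg (ha n _)]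
  have hsv : Summable fun n => ‖v n‖ := by simpa only [hv] using hnorm
  set S := ∑' n, v n
  have hS : ∀ j, ‖(S : κ → ℝ) j‖ ^ r = (∑' n, a n j) ^ r := fun j => by
    rw [show (S : κ → ℝ) j = ∑' n, a n j from
        (lp.evalCLM ℝ (fun _ : κ => ℝ) (ENNReal.ofReal r) j).map_tsum hsv.of_norm,
      Real.norm_of_nonneg (tsum_nonneg fun n => ha n j)]
  have hSsum := (lp.memℓp S).summable hr'
  have hSnorm := lp.norm_rpow_eq_tsum hr' S
  rw [hrr] at hSsum hSnorm
  simp only [hS] at hSsum hSnorm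
  refine ⟨hSsum, ?_⟩
  calc ∑' j, (∑' n, a n j) ^ r = ‖S‖ ^ r := hSnorm.symm
    _ ≤ (∑' n, ‖v n‖) ^ r := by gcongr; exact norm_tsum_le_tsum_norm hsv
    _ = _ := by simp only [hv]

theorem bddAbove_weak_rpow_tsum {𝕜 F : Type*} [RCLike 𝕜] [NormedAddCommGroup F]
    [NormedSpace 𝕜 F] {p : ℝ} (hp : 1 ≤ p) {xs : ℕ → F} (hxs : WeaklySummable 𝕜 p xs) :
    BddAbove (Set.range fun φ : {φ : StrongDual 𝕜 F // ‖φ‖ ≤ 1} =>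
      (∑' n, ‖φ.1 (xs n)‖ ^ p) ^ (1 / p)) := by
  have : Fact (1 ≤ ENNReal.ofReal p) := ⟨ENNReal.one_le_ofReal.2 hp⟩
  have hp0 : 0 < p := one_pos.trans_le hp
  have hpp : (ENNReal.ofReal p).toReal = p := ENNReal.toReal_ofReal hp0.le
  let g : Finset ℕ → (StrongDual 𝕜 F →L[𝕜] lp (fun _ : ℕ => 𝕜) (ENNReal.ofReal p)) := fun s =>
    ∑ n ∈ s, (ContinuousLinearMap.apply 𝕜 𝕜 (xs n)).smulRight (lp.single _ n 1)
  have hg : ∀ s φ, ‖g s φ‖ = (∑ n ∈ s, ‖φ (xs n)‖ ^ p) ^ (1 / p) := by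
    intro s φ
    have hgj : ∀ j, (g s φ : ℕ → 𝕜) j = if j ∈ s then φ (xs j) else 0 := fun j => by
      simp only [g, sum_apply, lp.coeFn_sum, Finset.sum_apply,
        ContinuousLinearMap.smulRight_apply, lp.coeFn_smul, Pi.smul_apply,
        ContinuousLinearMap.apply_apply, lp.single_apply, Pi.single_apply, smul_eq_mul,
        mul_ite, mul_one, mul_zero, Finset.sum_ite_eq]
    rw [lp.norm_eq_tsum_rpow (hpp.symm ▸ hp0), hpp, tsum_eq_sum (s := s) fun j hj => by
      rw [hgj, if_neg hj, norm_zero, Real.zero_rpow hp0.ne']]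
    exact congr_arg (· ^ (1 / p)) <| Finset.sum_congr rfl fun j hj => by rw [hgj, if_pos hj]
  obtain ⟨C, hC⟩ := banach_steinhaus (g := g) fun φ =>
    ⟨(∑' n, ‖φ (xs n)‖ ^ p) ^ (1 / p), fun s => by
      rw [hg]
      gcongr
      exact (hxs φ).sum_le_tsum s fun n _ => by positivity⟩
  refine ⟨C, Set.forall_mem_range.2 fun φ => rpow_tsum_le_of_forall_finset (hxs φ.1)
    (by positivity) fun s => ?_⟩
  calc (∑ n ∈ s, ‖φ.1 (xs n)‖ ^ p) ^ (1 / p) = ‖g s φ.1‖ := (hg s φ.1).symm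
    _ ≤ ‖g s‖ * ‖φ.1‖ := (g s).le_opNorm φ.1
    _ ≤ C * 1 := by gcongr; exacts [(norm_nonneg _).trans (hC ∅), hC s, φ.2]
    _ = C := mul_one C

theorem summable_and_tsum_le_of_isSummingConstant {𝕜 X Y : Type*} [RCLike 𝕜]
    [NormedAddCommGroup X] [NormedSpace 𝕜 X] [NormedAddCommGroup Y] [NormedSpace 𝕜 Y]
    {p : ℝ} (hp : 1 ≤ p) {u : X →L[𝕜] Y} {C : ℝ} (hC0 : 0 ≤ C) (hC : IsSummingConstant 𝕜 p u C)
    {xs : ℕ → X} (hxs : WeaklySummable 𝕜 p xs) :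
    Summable (fun n => ‖u (xs n)‖ ^ p) ∧ ∑' n, ‖u (xs n)‖ ^ p ≤ (C * weakNorm 𝕜 p xs) ^ p := by
  have hp0 : 0 < p := one_pos.trans_le hp
  have hpartial : ∀ k, ∑ n ∈ Finset.range k, ‖u (xs n)‖ ^ p ≤ (C * weakNorm 𝕜 p xs) ^ p := by
    intro k
    have hsup : (⨆ φ : {φ : StrongDual 𝕜 X // ‖φ‖ ≤ 1},
        (∑ j : Fin k, ‖φ.1 (xs j)‖ ^ p) ^ (1 / p)) ≤ weakNorm 𝕜 p xs := by
      have : Nonempty {φ : StrongDual 𝕜 X // ‖φ‖ ≤ 1} := ⟨⟨0, by simp⟩⟩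
      refine ciSup_le fun φ => le_ciSup_of_le (bddAbove_weak_rpow_tsum hp hxs) φ ?_
      rw [Fin.sum_univ_eq_sum_range (fun j => ‖φ.1 (xs j)‖ ^ p)]
      gcongr
      exact (hxs φ.1).sum_le_tsum _ fun n _ => by positivity
    have := (hC k (xs ·)).trans (mul_le_mul_of_nonneg_left hsup hC0)
    rwa [one_div, Real.rpow_inv_le_iff_of_pos (by positivity)
      (mul_nonneg hC0 (weakNorm_nonneg_s7 𝕜 p xs)) hp0,
      Fin.sum_univ_eq_sum_range (fun n => ‖u (xs n)‖ ^ p)] at this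
  exact ⟨summable_of_sum_range_le (fun n => by positivity) hpartial,
    Real.tsum_le_of_sum_range_le (fun n => by positivity) hpartial⟩

theorem summable_mid_and_tsum_le {𝕜 E : Type*} [RCLike 𝕜] [NormedAddCommGroup E]
    [NormedSpace 𝕜 E] {p q : ℝ} (hp : 1 ≤ p) (hpq : p ≤ q) [Fact (1 ≤ ENNReal.ofReal q)]
    {x : ℕ → E} {Ψ : StrongDual 𝕜 E →L[𝕜] lp (fun _ : ℕ => 𝕜) (ENNReal.ofReal q)}
    (hΨ : ∀ (φ : StrongDual 𝕜 E) (j : ℕ), (Ψ φ : ∀ _ : ℕ, 𝕜) j = φ (x j))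
    {C : ℝ} (hC0 : 0 ≤ C) (hC : IsSummingConstant 𝕜 p Ψ C)
    {xs : ℕ → StrongDual 𝕜 E} (hxs : WeaklySummable 𝕜 p xs) :
    Summable (fun j => (∑' n, ‖xs n (x j)‖ ^ p) ^ (q / p)) ∧
      ∑' j, (∑' n, ‖xs n (x j)‖ ^ p) ^ (q / p) ≤ (C * weakNorm 𝕜 p xs) ^ q := by
  have hp0 : 0 < p := one_pos.trans_le hp
  have hq0 : 0 < q := hp0.trans_le hpq
  have hqq : (ENNReal.ofReal q).toReal = q := ENNReal.toReal_ofReal hq0.le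
  have hentry : ∀ n j, (‖xs n (x j)‖ ^ p) ^ (q / p) = ‖(Ψ (xs n) : ℕ → 𝕜) j‖ ^ q := fun n j => by
    rw [← Real.rpow_mul (norm_nonneg _), mul_div_cancel₀ q hp0.ne', hΨ]
  have hrow : ∀ n, HasSum (fun j => (‖xs n (x j)‖ ^ p) ^ (q / p)) (‖Ψ (xs n)‖ ^ q) := fun n => by
    have := lp.hasSum_norm (hqq.symm ▸ hq0) (Ψ (xs n))
    simpa only [hqq, hentry] using this
  have hrow_norm : ∀ n, (∑' j, (‖xs n (x j)‖ ^ p) ^ (q / p)) ^ (1 / (q / p)) = ‖Ψ (xs n)‖ ^ p :=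
    fun n => by
      rw [(hrow n).tsum_eq, ← Real.rpow_mul (norm_nonneg _), one_div_div, mul_div_cancel₀ p hq0.ne']
  obtain ⟨hΨsum, hΨle⟩ := summable_and_tsum_le_of_isSummingConstant hp hC0 hC hxs
  obtain ⟨hsum, hle⟩ := summable_rpow_tsum_and_tsum_le ((one_le_div hp0).2 hpq)
    (fun n j => by positivity) (fun n => (hrow n).summable) (by simpa only [hrow_norm] using hΨsum)
  refine ⟨hsum, hle.trans ?_⟩
  calc (∑' n, (∑' j, (‖xs n (x j)‖ ^ p) ^ (q / p)) ^ (1 / (q / p))) ^ (q / p)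
      = (∑' n, ‖Ψ (xs n)‖ ^ p) ^ (q / p) := by simp only [hrow_norm]
    _ ≤ ((C * weakNorm 𝕜 p xs) ^ p) ^ (q / p) := by gcongr
    _ = (C * weakNorm 𝕜 p xs) ^ q := by
      rw [← Real.rpow_mul (mul_nonneg hC0 (weakNorm_nonneg_s7 𝕜 p xs)), mul_div_cancel₀ q hp0.ne']

variable {𝕜 E F : Type*}

theorem stmt7_general [RCLike 𝕜] [NormedAddCommGroup E] [NormedSpace 𝕜 E]
    (p q : ℝ) (hp : 1 ≤ p) (hpq : p ≤ q) [Fact (1 ≤ ENNReal.ofReal q)]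
    (x : ℕ → E)
    (Ψ : StrongDual 𝕜 E →L[𝕜] lp (fun _ : ℕ => 𝕜) (ENNReal.ofReal q))
    (hΨ : ∀ (φ : StrongDual 𝕜 E) (j : ℕ), (Ψ φ : ∀ _ : ℕ, 𝕜) j = φ (x j))
    (hsum : AbsolutelySumming 𝕜 p Ψ) :
    MidSummable 𝕜 q p x ∧ midNorm 𝕜 q p x ≤ piNorm 𝕜 p Ψ := by
  obtain ⟨C₀, hC₀, hC₀Ψ⟩ := hsum
  refine ⟨fun xs hxs => (summable_mid_and_tsum_le hp hpq hΨ hC₀.le hC₀Ψ hxs).1, ?_⟩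
  refine Real.iSup_le (fun ⟨xs, hxs, hxs1⟩ => ?_) (Real.sInf_nonneg fun C hC => hC.1.le)
  refine le_csInf ⟨C₀, hC₀, hC₀Ψ⟩ fun C ⟨hC0, hC⟩ => ?_
  have hq0 : 0 < q := one_pos.trans_le (hp.trans hpq)
  have hM := weakNorm_nonneg_s7 𝕜 p xs
  calc (∑' j, (∑' n, ‖xs n (x j)‖ ^ p) ^ (q / p)) ^ (1 / q)
      ≤ ((C * weakNorm 𝕜 p xs) ^ q) ^ (1 / q) := by
        gcongr
        exact (summable_mid_and_tsum_le hp hpq hΨ hC0.le hC hxs).2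
    _ = C * weakNorm 𝕜 p xs := by rw [one_div, Real.rpow_rpow_inv (by positivity) hq0.ne']
    _ ≤ C := mul_le_of_le_one_right hC0.le hxs1

/-- if `1 ≤ p ≤ q`, `x` is weakly `q`-summable and
`Ψ_x : E* → ℓ_q`, `Ψ_x(x^*) = (x^*(x_j))_j`, is absolutely `p`-summing, then `x` is
mid `(q,p)`-summable with `‖(x_j)‖_{q,p} ≤ π_p(Ψ_x)`. -/
theorem stmt7 [RCLike 𝕜] [NormedAddCommGroup E] [NormedSpace 𝕜 E] [CompleteSpace E]
    (p q : ℝ) (hp : 1 ≤ p) (hpq : p ≤ q) [Fact (1 ≤ ENNReal.ofReal q)]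
    (x : ℕ → E) (hx : WeaklySummable 𝕜 q x)
    (Ψ : StrongDual 𝕜 E →L[𝕜] lp (fun _ : ℕ => 𝕜) (ENNReal.ofReal q))
    (hΨ : ∀ (φ : StrongDual 𝕜 E) (j : ℕ), (Ψ φ : ∀ _ : ℕ, 𝕜) j = φ (x j))
    (hsum : AbsolutelySumming 𝕜 p Ψ) :
    MidSummable 𝕜 q p x ∧ midNorm 𝕜 q p x ≤ piNorm 𝕜 p Ψ :=
  stmt7_general p q hp hpq x Ψ hΨ hsum
end
end
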